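/- arXiv:2404.04380 — 2 statements merged into one kernel-verified Lean document; each statement's English description precedes it below -/
import Mathlib

section
/- Let I be a monomial ideal with minimal generating set M and fix a total order ≻ on M. Then I is not bridge-friendly with respect to ≻ if and only if there exist a type-1 subset τ ⊆ M and monomials m_1 ≻ m_2 in M such that: (1) m_1 and m_2 are true gaps of τ, neither of which dominates any bridge of τ (in particular m_1, m_2 ∉ τ); and (2) both τ∪{m_1} and τ∪{m_2} are potentially-type-2. In this case m_2 can be chosen to be the ≻-smallest true gap of τ. Moreover, under conditions (1) and (2) there exists m_3 ≺ m_2 in M that is a bridge of τ∪{m_1,m_2}; in particular m_3 ∈ τ. -/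
open scoped Classical

noncomputable section

namespace ChauHaMaithani

variable {V : Type*}

/-- The lcm of a finite set of monomials (exponent vectors): pointwise maximum. -/
def mlcm (σ : Finset (V → ℕ)) : V → ℕ := fun v => σ.sup fun g => g v

/-- `m` is a bridge of `σ`: `m ∈ σ` and dropping `m` does not change the lcm. -/
def IsBridge (σ : Finset (V → ℕ)) (m : V → ℕ) : Prop :=
  m ∈ σ ∧ mlcm (σ.erase m) = mlcm σ

/-- `m` is a gap of `σ`: `m ∉ σ` and adding `m` does not change the lcm. -/
def IsGap (σ : Finset (V → ℕ)) (m : V → ℕ) : Prop :=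
  m ∉ σ ∧ mlcm (insert m σ) = mlcm σ

/-- A total order `≻` on monomials is encoded by a ranking function `ord`:
`m ≻ m'` iff `ord m' < ord m` (injectivity on the generating set is assumed separately).
`m` is a true gap of `σ` if it is a gap and every bridge of `σ ∪ {m}` dominated by `m`
is already a bridge of `σ`. -/
def IsTrueGap (ord : (V → ℕ) → ℕ) (σ : Finset (V → ℕ)) (m : V → ℕ) : Prop :=
  IsGap σ m ∧ ∀ m', IsBridge (insert m σ) m' → ord m' < ord m → IsBridge σ m'

/-- `σ` is type-1: it has a true gap (in `M`) dominating none of its bridges. -/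
def Type1 (M : Finset (V → ℕ)) (ord : (V → ℕ) → ℕ) (σ : Finset (V → ℕ)) : Prop :=
  ∃ m ∈ M, IsTrueGap ord σ m ∧ ∀ b, IsBridge σ b → ¬ ord b < ord m

/-- `σ` is potentially-type-2: it has a bridge dominating none of its true gaps. -/
def PotType2 (M : Finset (V → ℕ)) (ord : (V → ℕ) → ℕ) (σ : Finset (V → ℕ)) : Prop :=
  ∃ b, IsBridge σ b ∧ ∀ m ∈ M, IsTrueGap ord σ m → ¬ ord m < ord b

/-- `b` is the `≻`-smallest bridge of `σ`. -/
def IsSBridge (ord : (V → ℕ) → ℕ) (σ : Finset (V → ℕ)) (b : V → ℕ) : Prop :=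
  IsBridge σ b ∧ ∀ b', IsBridge σ b' → ord b ≤ ord b'

/-- `σ` is type-2. -/
def Type2 (M : Finset (V → ℕ)) (ord : (V → ℕ) → ℕ) (σ : Finset (V → ℕ)) : Prop :=
  PotType2 M ord σ ∧
    ∀ σ' : Finset (V → ℕ), σ' ⊆ M → σ' ≠ σ → PotType2 M ord σ' →
      ∀ b b', IsSBridge ord σ b → IsSBridge ord σ' b' →
        σ'.erase b' = σ.erase b → ord b < ord b'

/-- `M` (the minimal generating set of a monomial ideal) is bridge-friendly w.r.t. `ord`:
every potentially-type-2 subset is type-2. -/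
def BridgeFriendlyWrt (M : Finset (V → ℕ)) (ord : (V → ℕ) → ℕ) : Prop :=
  ∀ σ ⊆ M, PotType2 M ord σ → Type2 M ord σ

/-- `M` is bridge-friendly: bridge-friendly w.r.t. some total order on `M`. -/
def BridgeFriendly (M : Finset (V → ℕ)) : Prop :=
  ∃ ord : (V → ℕ) → ℕ, Set.InjOn ord M ∧ BridgeFriendlyWrt M ord

/-- `σ = {m_1 ≻ ⋯ ≻ m_k} ⊆ M` is Lyubeznik-critical w.r.t. `ord`: there is no `m ∈ M` with
`m_t ≻ m` and `m ∣ lcm(m_1, …, m_t)` for some `1 < t ≤ k`. -/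
def LyubCritical (M : Finset (V → ℕ)) (ord : (V → ℕ) → ℕ) (σ : Finset (V → ℕ)) : Prop :=
  σ ⊆ M ∧ ¬ ∃ m ∈ M, ∃ t ∈ σ, (∃ u ∈ σ, ord t < ord u) ∧ ord m < ord t ∧
      ∀ v, m v ≤ mlcm (σ.filter fun g => ord t ≤ ord g) v

/-- `M` is Lyubeznik: for some total order on `M`, no Lyubeznik-critical subset has a
bridge (equivalently, the associated Lyubeznik resolution is minimal). -/
def IsLyubeznik (M : Finset (V → ℕ)) : Prop :=
  ∃ ord : (V → ℕ) → ℕ, Set.InjOn ord M ∧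
    ∀ σ : Finset (V → ℕ), LyubCritical M ord σ → ∀ b, ¬ IsBridge σ b

/-- The quadratic monomial `xy` attached to an edge `e = {x,y}`. -/
def edgeMon (e : Sym2 V) : V → ℕ := fun v => if v ∈ e then 1 else 0

/-- `mingens(I(G))`: the edge monomials of `G`. -/
def edgeGens [Fintype V] (G : SimpleGraph V) : Finset (V → ℕ) :=
  (Finset.univ.filter fun e : Sym2 V => e ∈ G.edgeSet).image edgeMon

/-- `mingens(I(G)^n)`: the monomials that are products of `n` edges of `G`. -/
def edgePowGens [Fintype V] (G : SimpleGraph V) (n : ℕ) : Finset (V → ℕ) :=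
  (Finset.univ.filter fun f : Fin n → Sym2 V => ∀ i, f i ∈ G.edgeSet).image
    fun f => ∑ i, edgeMon (f i)

/-- A graph is chordal if it contains no induced cycle of length at least 4. -/
def Chordal (G : SimpleGraph V) : Prop :=
  ∀ n, 4 ≤ n → IsEmpty (SimpleGraph.cycleGraph n ↪g G)


/-!
If `σ` is potentially-type-2 but not type-2, some other potentially-type-2 `σ'` has the same
`τ = σ ∖ {sbridge σ}` and `sbridge σ' ≼ sbridge σ`. The smallest bridge of a set is a true gap
of the set with it removed, dominating none of that set's bridges, so `m₁ = sbridge σ` and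
`m₂ = sbridge σ'` are such true gaps of `τ`; injectivity of the order makes `m₁ ≻ m₂`.
Replacing `m₂` by the smallest true gap of `τ` keeps `τ ∪ {m₂}` potentially-type-2, because a
true gap of `τ ∪ {m₂}` below its smallest bridge is a true gap of `τ` below `m₂`. Conversely, a
true gap `m` of `τ` dominating no bridge of `τ` is the smallest bridge of `τ ∪ {m}`, so
`τ ∪ {m₂}` witnesses that `τ ∪ {m₁}` is not type-2. Finally `m₂` is a gap of `τ ∪ {m₁}`
dominated by a bridge dominating no true gap, so it is not a true gap there: some bridge
`m₃ ≺ m₂` of `τ ∪ {m₁, m₂}` is not a bridge of `τ ∪ {m₁}`.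
-/

section Bridges

variable {σ τ : Finset (V → ℕ)} {m c : V → ℕ} {ord : (V → ℕ) → ℕ}

lemma mlcm_insert_apply (σ : Finset (V → ℕ)) (m : V → ℕ) (v : V) :
    mlcm (insert m σ) v = max (m v) (mlcm σ v) := by
  simp only [mlcm, Finset.sup_insert]

lemma IsGap.le_mlcm (h : IsGap σ m) (v : V) : m v ≤ mlcm σ v :=
  calc m v ≤ mlcm (insert m σ) v := Finset.le_sup (f := fun g => g v) (Finset.mem_insert_self m σ)
    _ = mlcm σ v := congrFun h.2 v

lemma isGap_of_le_mlcm (hm : m ∉ σ) (h : ∀ v, m v ≤ mlcm σ v) : IsGap σ m :=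
  ⟨hm, funext fun v => by rw [mlcm_insert_apply]; exact max_eq_right (h v)⟩

lemma IsBridge.insert (h : IsBridge σ c) (hmc : m ≠ c) : IsBridge (insert m σ) c := by
  refine ⟨Finset.mem_insert_of_mem h.1, funext fun v => ?_⟩
  rw [Finset.erase_insert_of_ne hmc, mlcm_insert_apply, mlcm_insert_apply, congrFun h.2 v]

lemma IsGap.isBridge_insert (h : IsGap σ m) : IsBridge (insert m σ) m :=
  ⟨Finset.mem_insert_self m σ, by rw [Finset.erase_insert h.1, h.2]⟩

lemma IsGap.insert (hm : IsGap σ m) (hcm : c ≠ m) : IsGap (insert c σ) m :=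
  isGap_of_le_mlcm (by simp [hcm.symm, hm.1]) fun v => by
    rw [mlcm_insert_apply]; exact (hm.le_mlcm v).trans (le_max_right _ _)

lemma exists_isSBridge (ord : (V → ℕ) → ℕ) (h : IsBridge σ c) : ∃ b, IsSBridge ord σ b := by
  obtain ⟨b, hb, hmin⟩ := Finset.exists_min_image (σ.filter (IsBridge σ)) ord
    ⟨c, Finset.mem_filter.mpr ⟨h.1, h⟩⟩
  exact ⟨b, (Finset.mem_filter.mp hb).2, fun b' hb' =>
    hmin b' (Finset.mem_filter.mpr ⟨hb'.1, hb'⟩)⟩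

lemma IsTrueGap.isSBridge_insert (htg : IsTrueGap ord σ m)
    (hd : ∀ b, IsBridge σ b → ¬ ord b < ord m) : IsSBridge ord (insert m σ) m :=
  ⟨htg.1.isBridge_insert, fun b hb => not_lt.mp fun hlt => hd b (htg.2 b hb hlt) hlt⟩

lemma IsSBridge.isTrueGap_erase (h : IsSBridge ord σ m) : IsTrueGap ord (σ.erase m) m := by
  have hσ : insert m (σ.erase m) = σ := Finset.insert_erase h.1.1
  refine ⟨⟨Finset.notMem_erase m σ, by rw [hσ, h.1.2]⟩, fun c hc hlt => ?_⟩
  exact absurd (h.2 c (hσ ▸ hc)) (not_le.mpr hlt)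

lemma IsSBridge.le_of_isBridge_erase (h : IsSBridge ord σ m) (hc : IsBridge (σ.erase m) c) :
    ord m ≤ ord c := by
  have hmc : m ≠ c := fun e => Finset.notMem_erase m σ (e ▸ hc.1)
  exact h.2 c (Finset.insert_erase h.1.1 ▸ hc.insert hmc)

lemma IsTrueGap.of_insert_of_lt_sbridge {g b : V → ℕ} (hg : IsGap τ g)
    (hb : IsSBridge ord (insert g τ) b) (hm : IsTrueGap ord (insert g τ) m)
    (hmb : ord m < ord b) : IsTrueGap ord τ m := by
  have hmτ : m ∉ τ := fun hx => hm.1.1 (Finset.mem_insert_of_mem hx)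
  have hgap : IsGap τ m :=
    isGap_of_le_mlcm hmτ fun v => (hm.1.le_mlcm v).trans_eq (congrFun hg.2 v)
  -- a bridge of `τ ∪ {m}` below `m` lies below `b ≼ g`, so it is a bridge of `τ ∪ {g, m}`,
  -- hence of `τ ∪ {g}`, which is impossible below the smallest bridge `b`
  refine ⟨hgap, fun c hc hcm => absurd ?_ (not_le.mpr (hcm.trans hmb))⟩
  have hbg : ord b ≤ ord g := hb.2 g hg.isBridge_insert
  have hgc : g ≠ c := by rintro rfl; omega
  have hc' := hc.insert hgc
  rw [Finset.insert_comm] at hc'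
  exact hb.2 c (hm.2 c hc' hcm)

end Bridges

section Configuration

variable {M τ : Finset (V → ℕ)} {ord : (V → ℕ) → ℕ} {m₁ m₂ : V → ℕ}

lemma potType2_insert_of_isTrueGap_min {g : V → ℕ} (hg : IsTrueGap ord τ g)
    (hmin : ∀ m ∈ M, IsTrueGap ord τ m → ord g ≤ ord m) : PotType2 M ord (insert g τ) := by
  obtain ⟨b, hb⟩ := exists_isSBridge ord hg.1.isBridge_insert
  refine ⟨b, hb.1, fun m hmM hm hmb => ?_⟩
  have := hmin m hmM (hm.of_insert_of_lt_sbridge hg.1 hb hmb)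
  have := hb.2 g hg.1.isBridge_insert
  omega

lemma exists_trueGaps_of_not_bridgeFriendlyWrt (hinj : Set.InjOn ord M)
    (h : ¬ BridgeFriendlyWrt M ord) :
    ∃ τ ⊆ M, ∃ m₁ ∈ M, ∃ m₂ ∈ M,
      Type1 M ord τ ∧ ord m₂ < ord m₁ ∧
      IsTrueGap ord τ m₁ ∧ IsTrueGap ord τ m₂ ∧
      (∀ b, IsBridge τ b → ¬ ord b < ord m₁) ∧
      (∀ b, IsBridge τ b → ¬ ord b < ord m₂) ∧
      PotType2 M ord (insert m₁ τ) ∧ PotType2 M ord (insert m₂ τ) ∧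
      (∀ g ∈ M, IsTrueGap ord τ g → ord m₂ ≤ ord g) := by
  simp only [BridgeFriendlyWrt, Type2, not_forall, not_and, not_lt] at h
  obtain ⟨σ, hσM, hσ, hnt⟩ := h
  obtain ⟨σ', hσ'M, hne, -, b, b', hb, hb', herase, hb'b⟩ := hnt hσ
  set τ := σ.erase b
  have hσ'τ : insert b' τ = σ' := herase ▸ Finset.insert_erase hb'.1.1
  have hbb' : b ≠ b' := fun e => hne (by rw [← hσ'τ, ← e, Finset.insert_erase hb.1.1])
  have hbM : b ∈ M := hσM hb.1.1
  have hlt : ord b' < ord b :=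
    hb'b.lt_of_ne fun e => hbb' (hinj hbM (hσ'M hb'.1.1) e.symm)
  have hgb' : IsTrueGap ord τ b' := herase ▸ hb'.isTrueGap_erase
  have hd : ∀ c, IsBridge τ c → ¬ ord c < ord b := fun c hc =>
    not_lt.mpr (hb.le_of_isBridge_erase hc)
  have hd' : ∀ c, IsBridge τ c → ord b' ≤ ord c := fun c hc =>
    hb'.le_of_isBridge_erase (herase ▸ hc)
  obtain ⟨g, hgT, hgmin⟩ := Finset.exists_min_image (M.filter (IsTrueGap ord τ)) ord
    ⟨b', Finset.mem_filter.mpr ⟨hσ'M hb'.1.1, hgb'⟩⟩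
  rw [Finset.mem_filter] at hgT
  have hmin : ∀ m ∈ M, IsTrueGap ord τ m → ord g ≤ ord m := fun m hmM hm =>
    hgmin m (Finset.mem_filter.mpr ⟨hmM, hm⟩)
  have hgb : ord g ≤ ord b' := hmin b' (hσ'M hb'.1.1) hgb'
  refine ⟨τ, (Finset.erase_subset b σ).trans hσM, b, hbM, g, hgT.1,
    ⟨b, hbM, hb.isTrueGap_erase, hd⟩, hgb.trans_lt hlt, hb.isTrueGap_erase, hgT.2, hd,
    fun c hc => not_lt.mpr (hgb.trans (hd' c hc)),
    (Finset.insert_erase hb.1.1).symm ▸ hσ, potType2_insert_of_isTrueGap_min hgT.2 hmin, hmin⟩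

lemma not_bridgeFriendlyWrt_of_trueGaps (hτ : τ ⊆ M) (hm₁ : m₁ ∈ M) (hm₂ : m₂ ∈ M)
    (hlt : ord m₂ < ord m₁) (htg₁ : IsTrueGap ord τ m₁) (htg₂ : IsTrueGap ord τ m₂)
    (hd₁ : ∀ b, IsBridge τ b → ¬ ord b < ord m₁) (hd₂ : ∀ b, IsBridge τ b → ¬ ord b < ord m₂)
    (hp₁ : PotType2 M ord (insert m₁ τ)) (hp₂ : PotType2 M ord (insert m₂ τ)) :
    ¬ BridgeFriendlyWrt M ord := by
  intro hBF
  have hne : insert m₂ τ ≠ insert m₁ τ := fun e => by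
    have : m₂ ∈ insert m₁ τ := e ▸ Finset.mem_insert_self m₂ τ
    rcases Finset.mem_insert.mp this with rfl | h
    · omega
    · exact htg₂.1.1 h
  have := (hBF _ (Finset.insert_subset hm₁ hτ) hp₁).2 _ (Finset.insert_subset hm₂ hτ) hne hp₂
    m₁ m₂ (htg₁.isSBridge_insert hd₁) (htg₂.isSBridge_insert hd₂)
    (by rw [Finset.erase_insert htg₂.1.1, Finset.erase_insert htg₁.1.1])
  omega

lemma exists_bridge_lt_of_potType2_insert (hm₂ : m₂ ∈ M) (hlt : ord m₂ < ord m₁)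
    (htg₁ : IsTrueGap ord τ m₁) (htg₂ : IsTrueGap ord τ m₂)
    (hd₁ : ∀ b, IsBridge τ b → ¬ ord b < ord m₁) (hp₁ : PotType2 M ord (insert m₁ τ)) :
    ∃ m₃ ∈ τ, ord m₃ < ord m₂ ∧ IsBridge (insert m₁ (insert m₂ τ)) m₃ := by
  obtain ⟨b, hb, hbt⟩ := hp₁
  have hm₁b : ord m₁ ≤ ord b := (htg₁.isSBridge_insert hd₁).2 b hb
  have hm₂m₁ : m₂ ≠ m₁ := by rintro rfl; omega
  have hgap : IsGap (insert m₁ τ) m₂ := htg₂.1.insert hm₂m₁.symm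
  have hnt : ¬ IsTrueGap ord (insert m₁ τ) m₂ := fun ht => hbt m₂ hm₂ ht (hlt.trans_le hm₁b)
  simp only [IsTrueGap, hgap, true_and, not_forall] at hnt
  obtain ⟨c, hc, hcm₂, -⟩ := hnt
  have hcτ : c ∈ τ := by
    rcases Finset.mem_insert.mp hc.1 with rfl | h
    · omega
    · rcases Finset.mem_insert.mp h with rfl | h
      · omega
      · exact h
  exact ⟨c, hcτ, hcm₂, Finset.insert_comm m₂ m₁ τ ▸ hc⟩

end Configuration

/-- **Lemma 2.8.** `I` is not bridge-friendly w.r.t. `≻` iff there are a type-1 set `τ`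
and `m₁ ≻ m₂` in `M` that are true gaps of `τ` dominating no bridge of `τ`, with
`τ ∪ {m₁}` and `τ ∪ {m₂}` potentially-type-2; `m₂` can be chosen to be the smallest
true gap of `τ`; and under these conditions there exists `m₃ ≺ m₂` that is a bridge of
`τ ∪ {m₁, m₂}` (in particular `m₃ ∈ τ`). -/
theorem not_bridgeFriendly_iff {V : Type*} (M : Finset (V → ℕ)) (ord : (V → ℕ) → ℕ)
    (hinj : Set.InjOn ord M) :
    (¬ BridgeFriendlyWrt M ord ↔
      ∃ τ ⊆ M, ∃ m₁ ∈ M, ∃ m₂ ∈ M,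
        Type1 M ord τ ∧ ord m₂ < ord m₁ ∧
        IsTrueGap ord τ m₁ ∧ IsTrueGap ord τ m₂ ∧
        (∀ b, IsBridge τ b → ¬ ord b < ord m₁) ∧
        (∀ b, IsBridge τ b → ¬ ord b < ord m₂) ∧
        PotType2 M ord (insert m₁ τ) ∧ PotType2 M ord (insert m₂ τ)) ∧
    (¬ BridgeFriendlyWrt M ord →
      ∃ τ ⊆ M, ∃ m₁ ∈ M, ∃ m₂ ∈ M,
        Type1 M ord τ ∧ ord m₂ < ord m₁ ∧
        IsTrueGap ord τ m₁ ∧ IsTrueGap ord τ m₂ ∧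
        (∀ b, IsBridge τ b → ¬ ord b < ord m₁) ∧
        (∀ b, IsBridge τ b → ¬ ord b < ord m₂) ∧
        PotType2 M ord (insert m₁ τ) ∧ PotType2 M ord (insert m₂ τ) ∧
        (∀ g ∈ M, IsTrueGap ord τ g → ord m₂ ≤ ord g)) ∧
    (∀ τ ⊆ M, ∀ m₁ ∈ M, ∀ m₂ ∈ M,
        Type1 M ord τ → ord m₂ < ord m₁ →
        IsTrueGap ord τ m₁ → IsTrueGap ord τ m₂ →
        (∀ b, IsBridge τ b → ¬ ord b < ord m₁) →
        (∀ b, IsBridge τ b → ¬ ord b < ord m₂) →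
        PotType2 M ord (insert m₁ τ) → PotType2 M ord (insert m₂ τ) →
        ∃ m₃ ∈ τ, ord m₃ < ord m₂ ∧ IsBridge (insert m₁ (insert m₂ τ)) m₃) := by
  refine ⟨⟨fun h => ?_, ?_⟩, exists_trueGaps_of_not_bridgeFriendlyWrt hinj, ?_⟩
  · obtain ⟨τ, hτ, m₁, hm₁, m₂, hm₂, h₁, h₂, h₃, h₄, h₅, h₆, h₇, h₈, -⟩ :=
      exists_trueGaps_of_not_bridgeFriendlyWrt hinj h
    exact ⟨τ, hτ, m₁, hm₁, m₂, hm₂, h₁, h₂, h₃, h₄, h₅, h₆, h₇, h₈⟩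
  · rintro ⟨τ, hτ, m₁, hm₁, m₂, hm₂, -, hlt, htg₁, htg₂, hd₁, hd₂, hp₁, hp₂⟩
    exact not_bridgeFriendlyWrt_of_trueGaps hτ hm₁ hm₂ hlt htg₁ htg₂ hd₁ hd₂ hp₁ hp₂
  · intro τ _ m₁ _ m₂ hm₂ _ hlt htg₁ htg₂ hd₁ _ hp₁ _
    exact exists_bridge_lt_of_potType2_insert hm₂ hlt htg₁ htg₂ hd₁ hp₁

end ChauHaMaithani
end
end

section
/- Let G be one of the following graphs: the path P_4 on 4 vertices, the triangle C_3, or the 4-cycle C_4, and let I = I(G) be its edge ideal. Then for every integer n ≥ 1 there exist a generator f ∈ mingens(I) and a monomial m such that {f·g : g ∈ mingens(I^n)} = {h ∈ mingens(I^{n+1}) : h divides m}; that is, f·I^n is an HHZ-subideal of I^{n+1}. -/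
/-!
Take `f = xy` and `m = f · (∏ᵥ v)ⁿ`. A vertex lies in at most `n` of `n` edges, so `f · g ∣ m` for
every product `g` of `n` edges. Conversely, suppose the edges of `G` lie on a closed walk
`x y z w x` with `xy, zw ∈ G` (for `P₄`, `C₃`, `C₄`), and let `h ∣ m` be a product of `n + 1`
edges. As `z` occurs in `h` at most `n` times, some edge of `h` avoids `z`: it is `xy` or `wx`.
In the second case some edge avoids `w` as well, and it is `xy` or `yz`; then
`wx · yz = xy · zw` exhibits `f` as a factor of `h` with an `n`-fold product of edges as cofactor.
-/

open scoped Classical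

noncomputable section

namespace ChauHaMaithani

variable {V : Type*}

/-- Vertex type of the graph `L(a,b,c)`: `Sum.inl 0` is `x`, `Sum.inl 1` is `y`,
and the remaining summands are the leaves `x_i`, the leaves `y_j`, and the
triangle tips `z_k`. -/
abbrev LV (a b c : ℕ) := Fin 2 ⊕ (Fin a ⊕ Fin b ⊕ Fin c)

/-- The graph `L(a,b,c)`: `c` triangles glued along the common edge `{x,y}`, with
`a` leaves attached to `x` and `b` leaves attached to `y`. -/
def LGraph (a b c : ℕ) : SimpleGraph (LV a b c) :=
  SimpleGraph.fromRel fun u v =>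
    (u = Sum.inl 0 ∧ v = Sum.inl 1) ∨
    (∃ i, u = Sum.inl 0 ∧ v = Sum.inr (Sum.inl i)) ∨
    (∃ j, u = Sum.inl 1 ∧ v = Sum.inr (Sum.inr (Sum.inl j))) ∨
    (∃ k, (u = Sum.inl 0 ∨ u = Sum.inl 1) ∧ v = Sum.inr (Sum.inr (Sum.inr k)))

/-- The graph `BF(T,w)`: attach `w(e)` new triangles along each edge `e` of `T`. -/
def BFGraph {VT : Type} (T : SimpleGraph VT) (w : T.edgeSet → ℕ) :
    SimpleGraph (VT ⊕ (Σ e : T.edgeSet, Fin (w e))) :=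
  SimpleGraph.fromRel fun u v =>
    (∃ a b, u = Sum.inl a ∧ v = Sum.inl b ∧ T.Adj a b) ∨
    (∃ (a : VT) (e : T.edgeSet) (i : Fin (w e)), u = Sum.inl a ∧ v = Sum.inr ⟨e, i⟩ ∧
      a ∈ (e : Sym2 VT))

/-- The kite graph: the diamond (`K₄` minus the edge `{2,3}`) together with a pendant
vertex `4` attached to the degree-two vertex `2`. -/
def kite : SimpleGraph (Fin 5) :=
  SimpleGraph.fromEdgeSet {s(0,1), s(0,2), s(0,3), s(1,2), s(1,3), s(2,4)}

/-- The gem graph: the path `0-1-2-3` together with a vertex `4` adjacent to all of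
`0,1,2,3`. -/
def gem : SimpleGraph (Fin 5) :=
  SimpleGraph.fromEdgeSet {s(0,1), s(1,2), s(2,3), s(0,4), s(1,4), s(2,4), s(3,4)}

/-- The tadpole graph: the triangle `0,1,2` with a path `0-3-4` of length 2 attached. -/
def tadpole : SimpleGraph (Fin 5) :=
  SimpleGraph.fromEdgeSet {s(0,1), s(1,2), s(0,2), s(0,3), s(3,4)}

/-- The butterfly graph: two triangles `0,1,2` and `0,3,4` sharing the vertex `0`. -/
def butterfly : SimpleGraph (Fin 5) :=
  SimpleGraph.fromEdgeSet {s(0,1), s(1,2), s(0,2), s(0,3), s(3,4), s(0,4)}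

/-- The net graph: the triangle `0,1,2` with pendant vertices `3,4,5` attached to
`0,1,2` respectively. -/
def net : SimpleGraph (Fin 6) :=
  SimpleGraph.fromEdgeSet {s(0,1), s(1,2), s(0,2), s(0,3), s(1,4), s(2,5)}



section EdgePowers

open Multiset

variable {V : Type*} {G : SimpleGraph V}

lemma edgeMon_mk_of_ne {x y : V} (h : x ≠ y) :
    edgeMon s(x, y) = Pi.single x 1 + Pi.single y 1 := by
  funext v
  by_cases hx : v = x <;> by_cases hy : v = y <;> simp_all [edgeMon]

lemma sum_map_edgeMon_apply (s : Multiset (Sym2 V)) (v : V) :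
    (s.map edgeMon).sum v = card (s.filter (v ∈ ·)) := by
  induction s using Multiset.induction with
  | empty => simp
  | cons e s ih => by_cases hv : v ∈ e <;> simp [edgeMon, hv, ih, add_comm]

lemma exists_notMem_of_sum_map_edgeMon_apply_lt {s : Multiset (Sym2 V)} {v : V}
    (h : (s.map edgeMon).sum v < card s) : ∃ e ∈ s, v ∉ e := by
  by_contra! hall
  rw [sum_map_edgeMon_apply, filter_eq_self.2 hall] at h
  exact h.false

variable [Fintype V]

lemma mem_edgePowGens_succ {n : ℕ} {m : V → ℕ} :
    m ∈ edgePowGens G (n + 1) ↔ ∃ e ∈ G.edgeSet, ∃ g ∈ edgePowGens G n, edgeMon e + g = m := by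
  simp only [edgePowGens, Finset.mem_image, Finset.mem_filter, Finset.mem_univ, true_and]
  constructor
  · rintro ⟨f, hf, rfl⟩
    exact ⟨f 0, hf 0, _, ⟨fun i => f i.succ, fun i => hf i.succ, rfl⟩,
      (Fin.sum_univ_succ fun i => edgeMon (f i)).symm⟩
  · rintro ⟨e, he, g, ⟨f, hf, rfl⟩, rfl⟩
    exact ⟨Fin.cons e f, Fin.cases he hf, by simp [Fin.sum_univ_succ]⟩

lemma mem_edgePowGens_iff {n : ℕ} {m : V → ℕ} :
    m ∈ edgePowGens G n ↔ ∃ s : Multiset (Sym2 V),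
      card s = n ∧ (∀ e ∈ s, e ∈ G.edgeSet) ∧ (s.map edgeMon).sum = m := by
  induction n generalizing m with
  | zero =>
    constructor
    · intro hm
      exact ⟨0, rfl, by simp, by simpa [edgePowGens, eq_comm] using hm⟩
    · rintro ⟨s, hs, -, rfl⟩
      simp [card_eq_zero.1 hs, edgePowGens]
  | succ n ih =>
    rw [mem_edgePowGens_succ]
    constructor
    · rintro ⟨e, he, g, hg, rfl⟩
      obtain ⟨s, rfl, hs, rfl⟩ := ih.1 hg
      exact ⟨e ::ₘ s, card_cons _ _, forall_mem_cons.2 ⟨he, hs⟩, by simp⟩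
    · rintro ⟨s, hcard, hs, rfl⟩
      obtain ⟨e, t, rfl, rfl⟩ := card_eq_succ_iff.1 hcard
      exact ⟨e, hs e (mem_cons_self _ _), _,
        ih.2 ⟨t, rfl, fun e he => hs e (mem_cons_of_mem he), rfl⟩, by simp⟩

lemma apply_le_of_mem_edgePowGens {n : ℕ} {g : V → ℕ} (hg : g ∈ edgePowGens G n) (v : V) :
    g v ≤ n := by
  obtain ⟨s, rfl, -, rfl⟩ := mem_edgePowGens_iff.1 hg
  rw [sum_map_edgeMon_apply]
  exact card_le_card (filter_le _ _)

lemma edgeMon_add_mem_edgePowGens {n : ℕ} {e : Sym2 V} (he : e ∈ G.edgeSet) {g : V → ℕ}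
    (hg : g ∈ edgePowGens G n) : edgeMon e + g ∈ edgePowGens G (n + 1) :=
  mem_edgePowGens_succ.2 ⟨e, he, g, hg, rfl⟩

lemma edgeMon_mem_edgeGens {e : Sym2 V} (he : e ∈ G.edgeSet) : edgeMon e ∈ edgeGens G := by
  simpa [edgeGens] using ⟨e, he, rfl⟩

lemma image_add_edgePowGens_eq_filter {n : ℕ} {f : V → ℕ} (hf : f ∈ edgeGens G)
    (hdvd : ∀ h ∈ edgePowGens G (n + 1), (∀ v, h v ≤ f v + n) →
      ∃ g ∈ edgePowGens G n, h = f + g) :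
    (edgePowGens G n).image (fun g => f + g) =
      (edgePowGens G (n + 1)).filter fun h => ∀ v, h v ≤ f v + n := by
  obtain ⟨e, he, rfl⟩ : ∃ e ∈ G.edgeSet, edgeMon e = f := by simpa [edgeGens] using hf
  ext h
  simp only [Finset.mem_image, Finset.mem_filter]
  constructor
  · rintro ⟨g, hg, rfl⟩
    exact ⟨edgeMon_add_mem_edgePowGens he hg,
      fun v => Nat.add_le_add_left (apply_le_of_mem_edgePowGens hg v) _⟩
  · rintro ⟨hh, hle⟩
    obtain ⟨g, hg, rfl⟩ := hdvd h hh hle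
    exact ⟨g, hg, rfl⟩

end EdgePowers

section Subsquare

open Multiset

variable {V W : Type*}

/-- The edges of `G` lie on the closed walk `x y z w x`, and the opposite sides `xy`, `zw` are
edges of `G`. The walk may degenerate: `C₃` is the case `w = x`. -/
structure IsSubsquare (G : SimpleGraph V) (x y z w : V) : Prop where
  adj_xy : G.Adj x y
  adj_zw : G.Adj z w
  z_ne_x : z ≠ x
  z_ne_y : z ≠ y
  edge_mem : ∀ e ∈ G.edgeSet, e = s(x, y) ∨ e = s(y, z) ∨ e = s(z, w) ∨ e = s(w, x)

lemma IsSubsquare.comap {G : SimpleGraph V} {H : SimpleGraph W} {x y z w : W}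
    (h : IsSubsquare H x y z w) (φ : G ≃g H) :
    IsSubsquare G (φ.symm x) (φ.symm y) (φ.symm z) (φ.symm w) where
  adj_xy := φ.symm.map_adj_iff.2 h.adj_xy
  adj_zw := φ.symm.map_adj_iff.2 h.adj_zw
  z_ne_x := φ.symm.injective.ne h.z_ne_x
  z_ne_y := φ.symm.injective.ne h.z_ne_y
  edge_mem e he := by
    have he' : e = (e.map φ).map φ.symm := by simp [Sym2.map_map]
    rcases h.edge_mem _ (φ.map_mem_edgeSet_iff.2 he) with h' | h' | h' | h' <;>
      rw [he', h'] <;> simp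

lemma IsSubsquare.mem_or_eq_cons_cons {G : SimpleGraph V} {x y z w : V}
    (hG : IsSubsquare G x y z w) {n : ℕ} {s : Multiset (Sym2 V)} (hcard : card s = n + 1)
    (hs : ∀ e ∈ s, e ∈ G.edgeSet)
    (hle : ∀ v, (s.map edgeMon).sum v ≤ edgeMon s(x, y) v + n) :
    s(x, y) ∈ s ∨ ∃ r, s = s(w, x) ::ₘ s(y, z) ::ₘ r := by
  have avoid : ∀ v, v ≠ x → v ≠ y → ∃ e ∈ s, v ∉ e := fun v hvx hvy =>
    exists_notMem_of_sum_map_edgeMon_apply_lt (by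
      have := hle v
      simp only [edgeMon, Sym2.mem_iff, hvx, hvy, or_self, if_false] at this
      omega)
  by_cases hxy : s(x, y) ∈ s
  · exact Or.inl hxy
  right
  obtain ⟨e, he, hze⟩ := avoid z hG.z_ne_x hG.z_ne_y
  obtain rfl : e = s(w, x) := by
    rcases hG.edge_mem e (hs e he) with rfl | rfl | rfl | rfl <;> simp_all
  have hwx : w ≠ x := G.ne_of_adj (hs _ he)
  have hwy : w ≠ y := by
    rintro rfl
    exact hxy (Sym2.eq_swap ▸ he)
  obtain ⟨e', he', hwe'⟩ := avoid w hwx hwy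
  obtain rfl : e' = s(y, z) := by
    rcases hG.edge_mem e' (hs e' he') with rfl | rfl | rfl | rfl <;> simp_all
  obtain ⟨t, rfl⟩ := exists_cons_of_mem he
  have hyz_ne : s(y, z) ≠ s(w, x) := fun h => hze (h ▸ Sym2.mem_mk_right y z)
  obtain ⟨r, rfl⟩ := exists_cons_of_mem ((mem_cons.1 he').resolve_left hyz_ne)
  exact ⟨r, rfl⟩

lemma IsSubsquare.exists_eq_add [Fintype V] {G : SimpleGraph V} {x y z w : V}
    (hG : IsSubsquare G x y z w) {n : ℕ} {h : V → ℕ} (hh : h ∈ edgePowGens G (n + 1))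
    (hle : ∀ v, h v ≤ edgeMon s(x, y) v + n) :
    ∃ g ∈ edgePowGens G n, h = edgeMon s(x, y) + g := by
  obtain ⟨s, hcard, hs, rfl⟩ := mem_edgePowGens_iff.1 hh
  rcases hG.mem_or_eq_cons_cons hcard hs hle with hxy | ⟨r, rfl⟩
  · obtain ⟨t, rfl⟩ := exists_cons_of_mem hxy
    exact ⟨_, mem_edgePowGens_iff.2 ⟨t, by simpa using hcard,
      fun e he => hs e (mem_cons_of_mem he), rfl⟩, by simp⟩
  · have hwx : w ≠ x := G.ne_of_adj (hs s(w, x) (by simp))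
    have hyz : y ≠ z := G.ne_of_adj (hs s(y, z) (by simp))
    refine ⟨_, mem_edgePowGens_iff.2 ⟨s(z, w) ::ₘ r, by simpa using hcard, ?_, rfl⟩, ?_⟩
    · simpa [forall_mem_cons, hG.adj_zw] using fun e he =>
        hs e (mem_cons_of_mem (mem_cons_of_mem he))
    · simp only [map_cons, sum_cons]
      rw [edgeMon_mk_of_ne hwx, edgeMon_mk_of_ne hyz, edgeMon_mk_of_ne (G.ne_of_adj hG.adj_xy),
        edgeMon_mk_of_ne (G.ne_of_adj hG.adj_zw)]
      abel

end Subsquare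

lemma isSubsquare_pathGraph_four : IsSubsquare (SimpleGraph.pathGraph 4) 0 1 2 3 where
  adj_xy := by simp [SimpleGraph.pathGraph_adj]
  adj_zw := by simp [SimpleGraph.pathGraph_adj]
  z_ne_x := by decide
  z_ne_y := by decide
  edge_mem := Sym2.ind fun u v h => by
    rw [SimpleGraph.mem_edgeSet, SimpleGraph.pathGraph_adj] at h
    revert u v; decide

lemma isSubsquare_cycleGraph_three : IsSubsquare (SimpleGraph.cycleGraph 3) 0 1 2 0 where
  adj_xy := by decide
  adj_zw := by decide
  z_ne_x := by decide
  z_ne_y := by decide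
  edge_mem := by decide

lemma isSubsquare_cycleGraph_four : IsSubsquare (SimpleGraph.cycleGraph 4) 0 1 2 3 where
  adj_xy := by decide
  adj_zw := by decide
  z_ne_x := by decide
  z_ne_y := by decide
  edge_mem := by decide

theorem power_HHZ_subideal_general {V : Type} [Fintype V] (G : SimpleGraph V)
    (hG : Nonempty (G ≃g SimpleGraph.pathGraph 4) ∨
      Nonempty (G ≃g SimpleGraph.cycleGraph 3) ∨
      Nonempty (G ≃g SimpleGraph.cycleGraph 4))
    (n : ℕ) :
    ∃ f ∈ edgeGens G, ∃ m : V → ℕ,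
      (edgePowGens G n).image (fun g => f + g) =
        (edgePowGens G (n + 1)).filter fun h => ∀ v, h v ≤ m v := by
  obtain ⟨x, y, z, w, hsq⟩ : ∃ x y z w, IsSubsquare G x y z w := by
    rcases hG with ⟨⟨φ⟩⟩ | ⟨⟨φ⟩⟩ | ⟨⟨φ⟩⟩
    exacts [⟨_, _, _, _, isSubsquare_pathGraph_four.comap φ⟩,
      ⟨_, _, _, _, isSubsquare_cycleGraph_three.comap φ⟩,
      ⟨_, _, _, _, isSubsquare_cycleGraph_four.comap φ⟩]
  have hf := edgeMon_mem_edgeGens (G.mem_edgeSet.2 hsq.adj_xy)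
  exact ⟨_, hf, _, image_add_edgePowGens_eq_filter hf fun h hh hle => hsq.exists_eq_add hh hle⟩

/-- **Proposition 2.17.** If `G` is `P₄`, `C₃` or `C₄`, then for every `n ≥ 1` there is
a generator `f ∈ mingens(I(G))` such that `f·I(G)^n` is an HHZ-subideal of `I(G)^{n+1}`:
for some monomial `m`, `{f·g : g ∈ mingens(I^n)} = {h ∈ mingens(I^{n+1}) : h ∣ m}`. -/
theorem power_HHZ_subideal {V : Type} [Fintype V] (G : SimpleGraph V)
    (hG : Nonempty (G ≃g SimpleGraph.pathGraph 4) ∨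
      Nonempty (G ≃g SimpleGraph.cycleGraph 3) ∨
      Nonempty (G ≃g SimpleGraph.cycleGraph 4))
    (n : ℕ) (hn : 1 ≤ n) :
    ∃ f ∈ edgeGens G, ∃ m : V → ℕ,
      (edgePowGens G n).image (fun g => f + g) =
        (edgePowGens G (n + 1)).filter fun h => ∀ v, h v ≤ m v :=
  power_HHZ_subideal_general G hG n

end ChauHaMaithani
end
end
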